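/- arXiv:1705.06037 — 4 statements merged into one kernel-verified Lean document; each statement's English description precedes it below -/
import Mathlib

section
/- For all finite hypergraphs H' and H'', the 2-section of their minimal-rank-preserving direct product equals the direct graph product of their 2-sections: [H' ×̌ H'']_2 = [H']_2 × [H'']_2 (equality of simple graphs on V(H')×V(H'')). -/
/-!
Basic definitions: finite hypergraphs (a finite nonempty vertex set `V`, given by
`[Fintype V] [Nonempty V]`, together with a set of nonempty edges), walks, distance,
connectedness, simplicity, rank, colorings, Helly property, covers,
the various hypergraph products, 2-sections, and graph products.
-/

/-- A hypergraph on a vertex type `V`: a collection of nonempty edges (finite subsets of `V`). -/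
structure Hypergraph' (V : Type*) where
  edges : Set (Finset V)
  nonempty_edges : ∀ e ∈ edges, e.Nonempty

namespace Hypergraph'

variable {V V₁ V₂ : Type*}

/-- There is a walk of length `n` from `u` to `v`: a sequence of vertices `w 0, …, w n`
and edges `f 1, …, f n` with consecutive vertices distinct and both contained
in the corresponding edge. -/
def HasWalk (H : Hypergraph' V) (u v : V) (n : ℕ) : Prop :=
  ∃ (w : Fin (n + 1) → V) (f : Fin n → Finset V),
    w 0 = u ∧ w (Fin.last n) = v ∧
      ∀ i : Fin n, f i ∈ H.edges ∧ w i.castSucc ≠ w i.succ ∧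
        w i.castSucc ∈ f i ∧ w i.succ ∈ f i

/-- The distance between two vertices: the minimum length of a walk joining them,
`⊤ = ∞` if there is none. -/
noncomputable def dist (H : Hypergraph' V) (u v : V) : ℕ∞ :=
  sInf {x : ℕ∞ | ∃ n : ℕ, x = n ∧ H.HasWalk u v n}

/-- A hypergraph is connected if any two vertices are joined by a walk. -/
def Connected (H : Hypergraph' V) : Prop := ∀ u v : V, ∃ n, H.HasWalk u v n

/-- A hypergraph is simple if every edge has at least two vertices and
no edge is contained in another edge. -/
def Simple (H : Hypergraph' V) : Prop :=
  (∀ e ∈ H.edges, 2 ≤ e.card) ∧ ∀ e ∈ H.edges, ∀ f ∈ H.edges, e ⊆ f → e = f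

/-- A hypergraph is loopless if every edge has at least two vertices. -/
def Loopless (H : Hypergraph' V) : Prop := ∀ e ∈ H.edges, 2 ≤ e.card

/-- The rank: the maximum cardinality of an edge. -/
noncomputable def rank (H : Hypergraph' V) : ℕ := sSup (Finset.card '' H.edges)

/-- The anti-rank: the minimum cardinality of an edge. -/
noncomputable def antirank (H : Hypergraph' V) : ℕ := sInf (Finset.card '' H.edges)

/-- A proper coloring: no color class contains an edge. -/
def IsProperColoring (H : Hypergraph' V) {k : ℕ} (c : V → Fin k) : Prop :=
  ∀ e ∈ H.edges, ∀ i : Fin k, ¬ ∀ v ∈ e, c v = i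

/-- A proper strong coloring: a proper coloring in which the vertices of every
edge receive pairwise distinct colors. -/
def IsStrongColoring (H : Hypergraph' V) {k : ℕ} (c : V → Fin k) : Prop :=
  H.IsProperColoring c ∧ ∀ e ∈ H.edges, ∀ u ∈ e, ∀ v ∈ e, u ≠ v → c u ≠ c v

/-- The chromatic number: the least `k` admitting a proper `k`-coloring. -/
noncomputable def chromaticNumber (H : Hypergraph' V) : ℕ :=
  sInf {k : ℕ | ∃ c : V → Fin k, H.IsProperColoring c}

/-- The strong chromatic number: the least `k` admitting a proper strong `k`-coloring. -/
noncomputable def strongChromaticNumber (H : Hypergraph' V) : ℕ :=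
  sInf {k : ℕ | ∃ c : V → Fin k, H.IsStrongColoring c}

/-- The Helly property: every intersecting family of edges is a star. -/
def Helly (H : Hypergraph' V) : Prop :=
  ∀ E' ⊆ H.edges, (∀ e ∈ E', ∀ f ∈ E', ∃ x, x ∈ e ∧ x ∈ f) → ∃ v, ∀ e ∈ E', v ∈ e

/-- The covering number: the minimum cardinality of a set of vertices meeting every edge. -/
noncomputable def coverNumber (H : Hypergraph' V) : ℕ :=
  sInf {k : ℕ | ∃ T : Finset V, T.card = k ∧ ∀ e ∈ H.edges, ∃ v ∈ T, v ∈ e}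

/-- The Cartesian product of hypergraphs. -/
def cartProd (H₁ : Hypergraph' V₁) (H₂ : Hypergraph' V₂) : Hypergraph' (V₁ × V₂) where
  edges := {E | (∃ x, ∃ f ∈ H₂.edges, E = {x} ×ˢ f) ∨ ∃ e ∈ H₁.edges, ∃ y, E = e ×ˢ {y}}
  nonempty_edges := by
    rintro E (⟨x, f, hf, rfl⟩ | ⟨e, he, y, rfl⟩)
    · exact (Finset.singleton_nonempty x).product (H₂.nonempty_edges f hf)
    · exact (H₁.nonempty_edges e he).product (Finset.singleton_nonempty y)

section Products

variable [DecidableEq V₁] [DecidableEq V₂]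

/-- The minimal-rank-preserving direct product `H₁ ×̌ H₂`. -/
def minDirProd (H₁ : Hypergraph' V₁) (H₂ : Hypergraph' V₂) : Hypergraph' (V₁ × V₂) where
  edges := {E | ∃ e₁ ∈ H₁.edges, ∃ e₂ ∈ H₂.edges,
    E ⊆ e₁ ×ˢ e₂ ∧ E.card = min e₁.card e₂.card ∧
      (E.image Prod.fst).card = min e₁.card e₂.card ∧
      (E.image Prod.snd).card = min e₁.card e₂.card}
  nonempty_edges := by
    rintro E ⟨e₁, h₁, e₂, h₂, -, hc, -, -⟩
    rw [← Finset.card_pos, hc]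
    exact lt_min (Finset.card_pos.mpr (H₁.nonempty_edges e₁ h₁))
      (Finset.card_pos.mpr (H₂.nonempty_edges e₂ h₂))

/-- The maximal-rank-preserving direct product `H₁ ×̂ H₂`. -/
def maxDirProd (H₁ : Hypergraph' V₁) (H₂ : Hypergraph' V₂) : Hypergraph' (V₁ × V₂) where
  edges := {E | ∃ e₁ ∈ H₁.edges, ∃ e₂ ∈ H₂.edges,
    E ⊆ e₁ ×ˢ e₂ ∧ E.card = max e₁.card e₂.card ∧
      E.image Prod.fst = e₁ ∧ E.image Prod.snd = e₂}
  nonempty_edges := by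
    rintro E ⟨e₁, h₁, e₂, h₂, -, hc, -, -⟩
    rw [← Finset.card_pos, hc]
    exact lt_max_iff.mpr (Or.inl (Finset.card_pos.mpr (H₁.nonempty_edges e₁ h₁)))

/-- The non-rank-preserving direct product `H₁ ×̃ H₂`. -/
def nrDirProd (H₁ : Hypergraph' V₁) (H₂ : Hypergraph' V₂) : Hypergraph' (V₁ × V₂) where
  edges := {E | ∃ e ∈ H₁.edges, ∃ f ∈ H₂.edges, ∃ x ∈ e, ∃ y ∈ f,
    E = insert (x, y) ((e.erase x) ×ˢ (f.erase y))}
  nonempty_edges := by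
    rintro E ⟨e, -, f, -, x, -, y, -, rfl⟩
    exact Finset.insert_nonempty _ _

/-- The normal product `H₁ ⊠̌ H₂`: union of the Cartesian product edges and the
minimal-rank-preserving direct product edges. -/
def normalProd (H₁ : Hypergraph' V₁) (H₂ : Hypergraph' V₂) : Hypergraph' (V₁ × V₂) where
  edges := (H₁.cartProd H₂).edges ∪ (H₁.minDirProd H₂).edges
  nonempty_edges := by
    rintro E (h | h)
    · exact (H₁.cartProd H₂).nonempty_edges E h
    · exact (H₁.minDirProd H₂).nonempty_edges E h

/-- The strong product `H₁ ⊠̂ H₂`: union of the Cartesian product edges and the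
maximal-rank-preserving direct product edges. -/
def strongProd (H₁ : Hypergraph' V₁) (H₂ : Hypergraph' V₂) : Hypergraph' (V₁ × V₂) where
  edges := (H₁.cartProd H₂).edges ∪ (H₁.maxDirProd H₂).edges
  nonempty_edges := by
    rintro E (h | h)
    · exact (H₁.cartProd H₂).nonempty_edges E h
    · exact (H₁.maxDirProd H₂).nonempty_edges E h

/-- The lexicographic product `H₁ ∘ H₂`. -/
def lexProd (H₁ : Hypergraph' V₁) (H₂ : Hypergraph' V₂) : Hypergraph' (V₁ × V₂) where
  edges := {E | (E.image Prod.fst ∈ H₁.edges ∧ (E.image Prod.fst).card = E.card) ∨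
    ∃ x, ∃ e₂ ∈ H₂.edges, E = {x} ×ˢ e₂}
  nonempty_edges := by
    rintro E (⟨h₁, hc⟩ | ⟨x, e₂, h₂, rfl⟩)
    · rw [← Finset.card_pos, ← hc]
      exact Finset.card_pos.mpr (H₁.nonempty_edges _ h₁)
    · exact (Finset.singleton_nonempty x).product (H₂.nonempty_edges e₂ h₂)

end Products

/-- The square product `H₁ ■ H₂`. -/
def squareProd (H₁ : Hypergraph' V₁) (H₂ : Hypergraph' V₂) : Hypergraph' (V₁ × V₂) where
  edges := {E | ∃ e₁ ∈ H₁.edges, ∃ e₂ ∈ H₂.edges, E = e₁ ×ˢ e₂}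
  nonempty_edges := by
    rintro E ⟨e₁, h₁, e₂, h₂, rfl⟩
    exact (H₁.nonempty_edges e₁ h₁).product (H₂.nonempty_edges e₂ h₂)

/-- The 2-section of a hypergraph: distinct vertices are adjacent iff they lie
in a common edge. -/
def twoSection (H : Hypergraph' V) : SimpleGraph V where
  Adj x y := x ≠ y ∧ ∃ e ∈ H.edges, x ∈ e ∧ y ∈ e
  symm := by constructor; rintro x y ⟨hxy, e, he, hx, hy⟩; exact ⟨hxy.symm, e, he, hy, hx⟩
  loopless := by constructor; rintro x ⟨hx, -⟩; exact hx rfl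

end Hypergraph'

namespace SimpleGraph

variable {V₁ V₂ : Type*}

/-- The direct (tensor) product of simple graphs. -/
def directProd (G₁ : SimpleGraph V₁) (G₂ : SimpleGraph V₂) : SimpleGraph (V₁ × V₂) where
  Adj x y := G₁.Adj x.1 y.1 ∧ G₂.Adj x.2 y.2
  symm := ⟨fun _ _ ⟨h₁, h₂⟩ => ⟨h₁.symm, h₂.symm⟩⟩
  loopless := ⟨fun x h => G₁.loopless.irrefl x.1 h.1⟩

/-- The strong product of simple graphs. -/
def strongGraphProd (G₁ : SimpleGraph V₁) (G₂ : SimpleGraph V₂) : SimpleGraph (V₁ × V₂) where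
  Adj x y := x ≠ y ∧ ((x.1 = y.1 ∧ G₂.Adj x.2 y.2) ∨ (x.2 = y.2 ∧ G₁.Adj x.1 y.1) ∨
    (G₁.Adj x.1 y.1 ∧ G₂.Adj x.2 y.2))
  symm := by
    constructor
    rintro x y ⟨hne, (⟨h, h'⟩ | ⟨h, h'⟩ | ⟨h, h'⟩)⟩
    · exact ⟨hne.symm, Or.inl ⟨h.symm, h'.symm⟩⟩
    · exact ⟨hne.symm, Or.inr (Or.inl ⟨h.symm, h'.symm⟩)⟩
    · exact ⟨hne.symm, Or.inr (Or.inr ⟨h.symm, h'.symm⟩)⟩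
  loopless := by constructor; rintro x ⟨hx, -⟩; exact hx rfl

/-- The lexicographic product of simple graphs. -/
def lexGraphProd (G₁ : SimpleGraph V₁) (G₂ : SimpleGraph V₂) : SimpleGraph (V₁ × V₂) where
  Adj x y := G₁.Adj x.1 y.1 ∨ (x.1 = y.1 ∧ G₂.Adj x.2 y.2)
  symm := by
    constructor
    rintro x y (h | ⟨h, h'⟩)
    · exact Or.inl h.symm
    · exact Or.inr ⟨h.symm, h'.symm⟩
  loopless := by
    constructor
    rintro x (h | ⟨-, h⟩)
    · exact G₁.loopless.irrefl x.1 h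
    · exact G₂.loopless.irrefl x.2 h

end SimpleGraph

/-!
Two distinct vertices of an edge of `H₁ ×̌ H₂` differ in both coordinates, since the cardinality
conditions make both projections injective on the edge. Conversely, for distinct `x, x' ∈ e₁` and
distinct `y, y' ∈ e₂`, put `m = min |e₁| |e₂|`, pick an `m`-subset `s ⊆ e₁` containing `x, x'` and
an injection `f : s → e₂` with `f x = y`, `f x' = y'`: the graph of `f` is an edge of `H₁ ×̌ H₂`
through `(x, y)` and `(x', y')`.
-/

open Finset

theorem Finset.exists_injOn_mapsTo_pair {α β : Type*} [DecidableEq β]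
    {s : Finset α} {t : Finset β} (hst : #s ≤ #t) {a a' : α} {b b' : β}
    (ha : a ∈ s) (ha' : a' ∈ s) (hb : b ∈ t) (hb' : b' ∈ t) (haa' : a ≠ a') (hbb' : b ≠ b') :
    ∃ f : α → β, Set.InjOn f s ∧ Set.MapsTo f s t ∧ f a = b ∧ f a' = b' := by
  classical
  have hpair : #{b, b'} ≤ #s := by
    rw [card_pair hbb', ← card_pair haa']
    exact card_le_card (insert_subset ha (singleton_subset_iff.mpr ha'))
  obtain ⟨t', hbt', ht't, hcard⟩ :=
    exists_subsuperset_card_eq (insert_subset hb (singleton_subset_iff.mpr hb')) hpair hst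
  obtain ⟨g, hg⟩ := Set.MapsTo.exists_equiv_extend_of_card_eq (α := s) (t := t')
    (s := {⟨a, ha⟩, ⟨a', ha'⟩}) (f := fun c => if c.1 = a then b else b')
    (by rw [Fintype.card_coe, hcard])
    (by rintro c (rfl | rfl) <;>
      simp [if_neg haa'.symm, hbt' (by simp : b ∈ _), hbt' (by simp : b' ∈ _)])
    (by rw [Set.injOn_pair]; simp [if_neg haa'.symm, hbb'])
  refine ⟨fun v => if hv : v ∈ s then g ⟨v, hv⟩ else b, ?_, ?_, ?_, ?_⟩
  · intro v hv w hw hvw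
    simp only [dif_pos (mem_coe.mp hv), dif_pos (mem_coe.mp hw)] at hvw
    exact congrArg Subtype.val (g.injective (Subtype.ext hvw))
  · intro v hv
    simpa only [dif_pos (mem_coe.mp hv), mem_coe] using ht't (g ⟨v, hv⟩).2
  · simpa only [dif_pos ha, if_pos] using hg ⟨a, ha⟩ (by simp)
  · simpa only [dif_pos ha', if_neg haa'.symm] using hg ⟨a', ha'⟩ (by simp)

namespace Hypergraph'

variable {V₁ V₂ : Type*} [DecidableEq V₁] [DecidableEq V₂] {H₁ : Hypergraph' V₁}
  {H₂ : Hypergraph' V₂}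

theorem exists_injOn_of_mem_minDirProd_edges {E : Finset (V₁ × V₂)}
    (hE : E ∈ (H₁.minDirProd H₂).edges) :
    ∃ e₁ ∈ H₁.edges, ∃ e₂ ∈ H₂.edges, E ⊆ e₁ ×ˢ e₂ ∧
      Set.InjOn Prod.fst (E : Set (V₁ × V₂)) ∧ Set.InjOn Prod.snd (E : Set (V₁ × V₂)) := by
  obtain ⟨e₁, he₁, e₂, he₂, hsub, hcard, hfst, hsnd⟩ := hE
  exact ⟨e₁, he₁, e₂, he₂, hsub, card_image_iff.mp (hfst.trans hcard.symm),
    card_image_iff.mp (hsnd.trans hcard.symm)⟩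

theorem image_graph_mem_minDirProd_edges {e₁ : Finset V₁} {e₂ : Finset V₂} {s : Finset V₁}
    {f : V₁ → V₂} (he₁ : e₁ ∈ H₁.edges) (he₂ : e₂ ∈ H₂.edges) (hs : s ⊆ e₁)
    (hcard : #s = min #e₁ #e₂) (hf : Set.InjOn f s) (hfs : Set.MapsTo f s e₂) :
    s.image (fun v => (v, f v)) ∈ (H₁.minDirProd H₂).edges := by
  have hgraph : Function.Injective fun v => (v, f v) := fun v w h => congrArg Prod.fst h
  refine ⟨e₁, he₁, e₂, he₂, ?_, ?_, ?_, ?_⟩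
  · intro p hp
    obtain ⟨v, hv, rfl⟩ := mem_image.mp hp
    exact mem_product.mpr ⟨hs hv, hfs hv⟩
  · rw [card_image_of_injective _ hgraph, hcard]
  · simpa only [image_image, Function.comp_def, image_id'] using hcard
  · rw [image_image]
    exact (card_image_of_injOn hf).trans hcard

theorem minDirProd_twoSection_le :
    (H₁.minDirProd H₂).twoSection ≤ H₁.twoSection.directProd H₂.twoSection := by
  rintro ⟨x, y⟩ ⟨x', y'⟩ ⟨hne, E, hE, hp, hp'⟩
  obtain ⟨e₁, he₁, e₂, he₂, hsub, hfst, hsnd⟩ := exists_injOn_of_mem_minDirProd_edges hE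
  have hp₁ := mem_product.mp (hsub hp)
  have hp₁' := mem_product.mp (hsub hp')
  exact ⟨⟨fun h => hne (hfst hp hp' h), e₁, he₁, hp₁.1, hp₁'.1⟩,
    ⟨fun h => hne (hsnd hp hp' h), e₂, he₂, hp₁.2, hp₁'.2⟩⟩

theorem directProd_twoSection_le :
    H₁.twoSection.directProd H₂.twoSection ≤ (H₁.minDirProd H₂).twoSection := by
  rintro p p' ⟨⟨hx, e₁, he₁, hxe, hxe'⟩, ⟨hy, e₂, he₂, hye, hye'⟩⟩
  have hpair₁ : {p.1, p'.1} ⊆ e₁ := insert_subset hxe (singleton_subset_iff.mpr hxe')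
  have hpair₂ : {p.2, p'.2} ⊆ e₂ := insert_subset hye (singleton_subset_iff.mpr hye')
  have htwo : #{p.1, p'.1} ≤ min #e₁ #e₂ :=
    le_min (card_le_card hpair₁) (card_pair hx ▸ card_pair hy ▸ card_le_card hpair₂)
  obtain ⟨s, hps, hse₁, hs⟩ := exists_subsuperset_card_eq hpair₁ htwo (min_le_left _ _)
  have hp : p.1 ∈ s := hps (mem_insert_self _ _)
  have hp' : p'.1 ∈ s := hps (mem_insert_of_mem (mem_singleton_self _))
  obtain ⟨f, hf, hfs, hfp, hfp'⟩ :=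
    exists_injOn_mapsTo_pair (hs.trans_le (min_le_right _ _)) hp hp' hye hye' hx hy
  exact ⟨fun h => hx (congrArg Prod.fst h), _,
    image_graph_mem_minDirProd_edges he₁ he₂ hse₁ hs hf hfs,
    mem_image.mpr ⟨_, hp, Prod.ext rfl hfp⟩, mem_image.mpr ⟨_, hp', Prod.ext rfl hfp'⟩⟩

end Hypergraph'

theorem twoSection_minDirProd_general {V₁ V₂ : Type*} [DecidableEq V₁]
    [DecidableEq V₂] (H₁ : Hypergraph' V₁) (H₂ : Hypergraph' V₂) :
    (H₁.minDirProd H₂).twoSection =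
      SimpleGraph.directProd H₁.twoSection H₂.twoSection :=
  le_antisymm Hypergraph'.minDirProd_twoSection_le Hypergraph'.directProd_twoSection_le

/-- the 2-section of the minimal-rank-preserving direct product is the
direct product of the 2-sections. -/
theorem twoSection_minDirProd {V₁ V₂ : Type*} [Fintype V₁] [Nonempty V₁] [DecidableEq V₁]
    [Fintype V₂] [Nonempty V₂] [DecidableEq V₂] (H₁ : Hypergraph' V₁) (H₂ : Hypergraph' V₂) :
    (H₁.minDirProd H₂).twoSection =
      SimpleGraph.directProd H₁.twoSection H₂.twoSection :=
  twoSection_minDirProd_general H₁ H₂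
end

section
/- If H1 and H2 are simple finite hypergraphs, then their minimal-rank-preserving direct product H1×̌H2 is a simple hypergraph. -/
/-! An edge `E ⊆ e₁ ×ˢ e₂` of `H₁ ×̌ H₂` with, say, `|e₁| ≤ |e₂|` projects bijectively onto `e₁`.
If `E ⊆ F` for an edge `F ⊆ f₁ ×ˢ f₂`, then `e₁ ⊆ f₁`, so `e₁ = f₁` because `H₁` is simple, and
`|F| ≤ |f₁| = |E|` forces `E = F`. -/

namespace Hypergraph'

open Finset

variable {V₁ V₂ : Type*} [DecidableEq V₁] [DecidableEq V₂]
  {H₁ : Hypergraph' V₁} {H₂ : Hypergraph' V₂}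

theorem Loopless.minDirProd (h₁ : H₁.Loopless) (h₂ : H₂.Loopless) :
    (H₁.minDirProd H₂).Loopless := by
  rintro E ⟨e₁, he₁, e₂, he₂, -, hE, -, -⟩
  rw [hE]
  exact le_min (h₁ e₁ he₁) (h₂ e₂ he₂)

theorem image_mem_edges_of_mem_minDirProd {E : Finset (V₁ × V₂)}
    (hE : E ∈ (H₁.minDirProd H₂).edges) :
    (E.image Prod.fst ∈ H₁.edges ∧ #E = #(E.image Prod.fst)) ∨
      (E.image Prod.snd ∈ H₂.edges ∧ #E = #(E.image Prod.snd)) := by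
  obtain ⟨e₁, he₁, e₂, he₂, hsub, hE, hfst, hsnd⟩ := hE
  rcases min_cases #e₁ #e₂ with ⟨hmin, -⟩ | ⟨hmin, -⟩
  · have hproj : E.image Prod.fst = e₁ :=
      eq_of_subset_of_card_le ((image_subset_image hsub).trans subset_product_image_fst)
        (by rw [hfst, hmin])
    exact .inl ⟨hproj ▸ he₁, hE.trans hfst.symm⟩
  · have hproj : E.image Prod.snd = e₂ :=
      eq_of_subset_of_card_le ((image_subset_image hsub).trans subset_product_image_snd)
        (by rw [hsnd, hmin])
    exact .inr ⟨hproj ▸ he₂, hE.trans hsnd.symm⟩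

theorem eq_of_subset_of_image_mem_edges {α W : Type*} [DecidableEq W] {H : Hypergraph' W}
    (hH : ∀ e ∈ H.edges, ∀ f ∈ H.edges, e ⊆ f → e = f) {π : α → W} {E F : Finset α}
    {f : Finset W} (hEF : E ⊆ F) (hE : E.image π ∈ H.edges) (hEc : #E = #(E.image π))
    (hf : f ∈ H.edges) (hFf : F.image π ⊆ f) (hFc : #F ≤ #f) : E = F := by
  have himage : E.image π = f := hH _ hE f hf ((image_subset_image hEF).trans hFf)
  exact eq_of_subset_of_card_le hEF (by rwa [hEc, himage])

end Hypergraph'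

theorem simple_minDirProd_general {V₁ V₂ : Type*} [DecidableEq V₁] [DecidableEq V₂]
    (H₁ : Hypergraph' V₁) (H₂ : Hypergraph' V₂) (h₁ : H₁.Simple) (h₂ : H₂.Simple) :
    (H₁.minDirProd H₂).Simple := by
  refine ⟨Hypergraph'.Loopless.minDirProd h₁.1 h₂.1, fun E hE F hF hEF => ?_⟩
  obtain ⟨f₁, hf₁, f₂, hf₂, hFf, hFc, -, -⟩ := hF
  rcases Hypergraph'.image_mem_edges_of_mem_minDirProd hE with ⟨hE₁, hEc⟩ | ⟨hE₂, hEc⟩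
  · exact Hypergraph'.eq_of_subset_of_image_mem_edges h₁.2 hEF hE₁ hEc hf₁
      ((Finset.image_subset_image hFf).trans Finset.subset_product_image_fst)
      (hFc.trans_le (min_le_left _ _))
  · exact Hypergraph'.eq_of_subset_of_image_mem_edges h₂.2 hEF hE₂ hEc hf₂
      ((Finset.image_subset_image hFf).trans Finset.subset_product_image_snd)
      (hFc.trans_le (min_le_right _ _))

/-- the minimal-rank-preserving direct product of simple hypergraphs is simple. -/
theorem simple_minDirProd {V₁ V₂ : Type*} [Fintype V₁] [Nonempty V₁] [DecidableEq V₁]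
    [Fintype V₂] [Nonempty V₂] [DecidableEq V₂] (H₁ : Hypergraph' V₁) (H₂ : Hypergraph' V₂)
    (h₁ : H₁.Simple) (h₂ : H₂.Simple) :
    (H₁.minDirProd H₂).Simple :=
  simple_minDirProd_general H₁ H₂ h₁ h₂
end

section
/- For all finite hypergraphs H' and H'', the 2-section of their normal product equals the strong graph product of their 2-sections: [H' ⊠̌ H'']_2 = [H']_2 ⊠ [H'']_2 (equality of simple graphs on V(H')×V(H'')). -/
/-!
An edge of the Cartesian product contributes exactly the edges of the box product of the
2-sections, and an edge of `H₁ ×̌ H₂` exactly those of their direct product: both projections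
are injective on it, and conversely, if `a ≠ c` lie in `e₁` and `b ≠ d` in `e₂`, the pairs
`(a, b)`, `(c, d)` lie on the graph of an injection from the smaller of `e₁`, `e₂` into the
larger that sends `a` to `b` and `c` to `d`, which is an edge of `H₁ ×̌ H₂`. The strong product
of graphs is the union of their box and direct products.
-/

open Function Set

theorem Finset.exists_mapsTo_injOn_apply_eq_apply_eq {α β : Type*} {s : Finset α}
    {t : Finset β} (hst : s.card ≤ t.card) {a c : α} {b d : β} (ha : a ∈ s) (hc : c ∈ s)
    (hb : b ∈ t) (hd : d ∈ t) (hac : a ≠ c) (hbd : b ≠ d) :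
    ∃ f : α → β, MapsTo f s t ∧ InjOn f s ∧ f a = b ∧ f c = d := by
  classical
  have : Nonempty β := ⟨b⟩
  obtain ⟨φ, hφ, hφ_inj⟩ := (s : Set α).toFinite.exists_injOn_of_encard_le (t := (t : Set β))
    (by simpa only [encard_coe_eq_coe_finsetCard, Nat.cast_le] using hst)
  have swap_mapsTo : ∀ {u v : β}, u ∈ t → v ∈ t → MapsTo (Equiv.swap u v) t t := by
    intro u v hu hv x hx
    rw [Equiv.swap_apply_def]
    split_ifs <;> assumption
  -- two transpositions of `t` move `φ a` to `b` and then `φ c` to `d` without moving `b` again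
  set σ₁ := Equiv.swap (φ a) b
  set σ₂ := Equiv.swap (σ₁ (φ c)) d
  have hσ₁c : σ₁ (φ c) ≠ b := fun h ↦
    hac (hφ_inj ha hc (σ₁.injective ((Equiv.swap_apply_left _ _).trans h.symm)))
  refine ⟨σ₂ ∘ σ₁ ∘ φ, (swap_mapsTo ?_ hd).comp ((swap_mapsTo (hφ ha) hb).comp hφ),
    σ₂.injective.comp_injOn (σ₁.injective.comp_injOn hφ_inj), ?_, Equiv.swap_apply_left _ _⟩
  · exact swap_mapsTo (hφ ha) hb (hφ hc)
  · simp only [comp_apply, σ₂, σ₁, Equiv.swap_apply_left]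
    exact Equiv.swap_apply_of_ne_of_ne hσ₁c.symm hbd

namespace Hypergraph'

variable {V V₁ V₂ : Type*}

theorem twoSection_eq_sup_of_edges_eq_union {H H₁ H₂ : Hypergraph' V}
    (h : H.edges = H₁.edges ∪ H₂.edges) : H.twoSection = H₁.twoSection ⊔ H₂.twoSection := by
  ext x y
  simp only [twoSection, SimpleGraph.sup_adj, h, Set.mem_union, or_and_right, exists_or,
    ← and_or_left]

theorem twoSection_cartProd (H₁ : Hypergraph' V₁) (H₂ : Hypergraph' V₂) :
    (H₁.cartProd H₂).twoSection = H₁.twoSection □ H₂.twoSection := by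
  ext ⟨a, b⟩ ⟨c, d⟩
  simp only [twoSection, cartProd, SimpleGraph.boxProd_adj]
  constructor
  · rintro ⟨hne, E, ⟨x, f, hf, rfl⟩ | ⟨e, he, y, rfl⟩, hab, hcd⟩
    all_goals simp only [Finset.mem_product, Finset.mem_singleton] at hab hcd
    · obtain ⟨rfl, hb⟩ := hab
      obtain ⟨rfl, hd⟩ := hcd
      exact Or.inr ⟨⟨fun h ↦ hne (h ▸ rfl), f, hf, hb, hd⟩, rfl⟩
    · obtain ⟨ha, rfl⟩ := hab
      obtain ⟨hc, rfl⟩ := hcd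
      exact Or.inl ⟨⟨fun h ↦ hne (h ▸ rfl), e, he, ha, hc⟩, rfl⟩
  · rintro (⟨⟨hac, e, he, ha, hc⟩, rfl⟩ | ⟨⟨hbd, f, hf, hb, hd⟩, rfl⟩)
    · exact ⟨fun h ↦ hac (Prod.ext_iff.1 h).1, e ×ˢ {b}, Or.inr ⟨e, he, b, rfl⟩,
        by simpa using ha, by simpa using hc⟩
    · exact ⟨fun h ↦ hbd (Prod.ext_iff.1 h).2, {a} ×ˢ f, Or.inl ⟨a, f, hf, rfl⟩,
        by simpa using hb, by simpa using hd⟩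

section MinDirProd

variable [DecidableEq V₁] [DecidableEq V₂] {H₁ : Hypergraph' V₁} {H₂ : Hypergraph' V₂}

theorem image_swap_mem_minDirProd {E : Finset (V₁ × V₂)} (hE : E ∈ (H₁.minDirProd H₂).edges) :
    E.image Prod.swap ∈ (H₂.minDirProd H₁).edges := by
  obtain ⟨e₁, h₁, e₂, h₂, hsub, hcard, hfst, hsnd⟩ := hE
  refine ⟨e₂, h₂, e₁, h₁, ?_, ?_, ?_, ?_⟩
  · exact (Finset.image_subset_image hsub).trans (Finset.image_swap_product e₂ e₁).le
  · rwa [Finset.card_image_of_injective _ Prod.swap_injective, min_comm]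
  · rwa [Finset.image_image, min_comm]
  · rwa [Finset.image_image, min_comm]

theorem image_graph_mem_minDirProd {e₁ : Finset V₁} {e₂ : Finset V₂} (h₁ : e₁ ∈ H₁.edges)
    (h₂ : e₂ ∈ H₂.edges) (hle : e₁.card ≤ e₂.card) {f : V₁ → V₂} (hf : MapsTo f e₁ e₂)
    (hf_inj : InjOn f e₁) : e₁.image (fun x ↦ (x, f x)) ∈ (H₁.minDirProd H₂).edges := by
  have hcard : (e₁.image fun x ↦ (x, f x)).card = e₁.card :=
    Finset.card_image_of_injective _ fun x y h ↦ (Prod.ext_iff.1 h).1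
  have hmin : min e₁.card e₂.card = e₁.card := min_eq_left hle
  refine ⟨e₁, h₁, e₂, h₂, ?_, hcard.trans hmin.symm, ?_, ?_⟩
  · intro p hp
    obtain ⟨x, hx, rfl⟩ := Finset.mem_image.1 hp
    exact Finset.mem_product.2 ⟨hx, hf hx⟩
  · rw [hmin, Finset.image_image]
    exact Finset.card_image_of_injective _ injective_id
  · rw [hmin, Finset.image_image]
    exact Finset.card_image_of_injOn hf_inj

theorem exists_mem_minDirProd {e₁ : Finset V₁} {e₂ : Finset V₂} (h₁ : e₁ ∈ H₁.edges)
    (h₂ : e₂ ∈ H₂.edges) {a c : V₁} {b d : V₂} (ha : a ∈ e₁) (hc : c ∈ e₁) (hb : b ∈ e₂)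
    (hd : d ∈ e₂) (hac : a ≠ c) (hbd : b ≠ d) :
    ∃ E ∈ (H₁.minDirProd H₂).edges, (a, b) ∈ E ∧ (c, d) ∈ E := by
  rcases le_total e₁.card e₂.card with hle | hle
  · obtain ⟨f, hf, hf_inj, rfl, rfl⟩ :=
      Finset.exists_mapsTo_injOn_apply_eq_apply_eq hle ha hc hb hd hac hbd
    exact ⟨_, image_graph_mem_minDirProd h₁ h₂ hle hf hf_inj,
      Finset.mem_image_of_mem _ ha, Finset.mem_image_of_mem _ hc⟩
  · obtain ⟨g, hg, hg_inj, rfl, rfl⟩ :=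
      Finset.exists_mapsTo_injOn_apply_eq_apply_eq hle hb hd ha hc hbd hac
    exact ⟨_, image_swap_mem_minDirProd (image_graph_mem_minDirProd h₂ h₁ hle hg hg_inj),
      Finset.mem_image_of_mem _ (Finset.mem_image_of_mem _ hb),
      Finset.mem_image_of_mem _ (Finset.mem_image_of_mem _ hd)⟩

theorem fst_ne_and_snd_ne_of_mem_minDirProd {E : Finset (V₁ × V₂)}
    (hE : E ∈ (H₁.minDirProd H₂).edges) {p q : V₁ × V₂} (hp : p ∈ E) (hq : q ∈ E)
    (hpq : p ≠ q) : p.1 ≠ q.1 ∧ p.2 ≠ q.2 := by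
  obtain ⟨_, _, _, _, _, hcard, hfst, hsnd⟩ := hE
  rw [← hcard] at hfst hsnd
  exact ⟨(Finset.card_image_iff.1 hfst).ne hp hq hpq, (Finset.card_image_iff.1 hsnd).ne hp hq hpq⟩

theorem twoSection_minDirProd (H₁ : Hypergraph' V₁) (H₂ : Hypergraph' V₂) :
    (H₁.minDirProd H₂).twoSection = H₁.twoSection.directProd H₂.twoSection := by
  ext p q
  constructor
  · rintro ⟨hpq, E, hE, hp, hq⟩
    obtain ⟨hne₁, hne₂⟩ := fst_ne_and_snd_ne_of_mem_minDirProd hE hp hq hpq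
    obtain ⟨e₁, h₁, e₂, h₂, hsub, -⟩ := hE
    obtain ⟨hp₁, hp₂⟩ := Finset.mem_product.1 (hsub hp)
    obtain ⟨hq₁, hq₂⟩ := Finset.mem_product.1 (hsub hq)
    exact ⟨⟨hne₁, e₁, h₁, hp₁, hq₁⟩, hne₂, e₂, h₂, hp₂, hq₂⟩
  · rintro ⟨⟨hac, e₁, h₁, ha, hc⟩, hbd, e₂, h₂, hb, hd⟩
    obtain ⟨E, hE, hp, hq⟩ := exists_mem_minDirProd h₁ h₂ ha hc hb hd hac hbd
    exact ⟨fun h ↦ hac (congrArg Prod.fst h), E, hE, hp, hq⟩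

end MinDirProd

end Hypergraph'

namespace SimpleGraph

theorem strongGraphProd_eq_boxProd_sup_directProd {V₁ V₂ : Type*}
    (G₁ : SimpleGraph V₁) (G₂ : SimpleGraph V₂) :
    G₁.strongGraphProd G₂ = (G₁ □ G₂) ⊔ G₁.directProd G₂ := by
  ext p q
  simp only [strongGraphProd, directProd, sup_adj, boxProd_adj]
  constructor
  · rintro ⟨-, ⟨h, h'⟩ | ⟨h, h'⟩ | h⟩
    exacts [Or.inl (Or.inr ⟨h', h⟩), Or.inl (Or.inl ⟨h', h⟩), Or.inr h]
  · rintro ((⟨h, h'⟩ | ⟨h, h'⟩) | h)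
    · exact ⟨fun hpq ↦ h.ne (congrArg Prod.fst hpq), Or.inr (Or.inl ⟨h', h⟩)⟩
    · exact ⟨fun hpq ↦ h.ne (congrArg Prod.snd hpq), Or.inl ⟨h', h⟩⟩
    · exact ⟨fun hpq ↦ h.1.ne (congrArg Prod.fst hpq), Or.inr (Or.inr h)⟩

end SimpleGraph

theorem twoSection_normalProd_general {V₁ V₂ : Type*} [DecidableEq V₁] [DecidableEq V₂]
    (H₁ : Hypergraph' V₁) (H₂ : Hypergraph' V₂) :
    (H₁.normalProd H₂).twoSection =
      SimpleGraph.strongGraphProd H₁.twoSection H₂.twoSection := by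
  rw [Hypergraph'.twoSection_eq_sup_of_edges_eq_union rfl, Hypergraph'.twoSection_cartProd,
    Hypergraph'.twoSection_minDirProd, SimpleGraph.strongGraphProd_eq_boxProd_sup_directProd]

/-- the 2-section of the normal product is the strong product of the
2-sections. -/
theorem twoSection_normalProd {V₁ V₂ : Type*} [Fintype V₁] [Nonempty V₁] [DecidableEq V₁]
    [Fintype V₂] [Nonempty V₂] [DecidableEq V₂] (H₁ : Hypergraph' V₁) (H₂ : Hypergraph' V₂) :
    (H₁.normalProd H₂).twoSection =
      SimpleGraph.strongGraphProd H₁.twoSection H₂.twoSection :=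
  twoSection_normalProd_general H₁ H₂
end

section
/- For all finite hypergraphs H' and H'', the 2-section of their lexicographic product equals the lexicographic graph product of their 2-sections: [H' ∘ H'']_2 = [H']_2 ∘ [H'']_2 (equality of simple graphs on V(H')×V(H'')). -/
/-!
Basic definitions: finite hypergraphs (a finite nonempty vertex set `V`, given by
`[Fintype V] [Nonempty V]`, together with a set of nonempty edges), walks, distance,
connectedness, simplicity, rank, colorings, Helly property, covers,
the various hypergraph products, 2-sections, and graph products.
-/

/-- A hypergraph on a vertex type `V`: a collection of nonempty edges (finite subsets of `V`). -/
structure FinHypergraph (V : Type*) where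
  edges : Set (Finset V)
  nonempty_edges : ∀ e ∈ edges, e.Nonempty

namespace FinHypergraph

variable {V V₁ V₂ : Type*}

/-- There is a walk of length `n` from `u` to `v`: a sequence of vertices `w 0, …, w n`
and edges `f 1, …, f n` with consecutive vertices distinct and both contained
in the corresponding edge. -/
def HasWalk (H : FinHypergraph V) (u v : V) (n : ℕ) : Prop :=
  ∃ (w : Fin (n + 1) → V) (f : Fin n → Finset V),
    w 0 = u ∧ w (Fin.last n) = v ∧
      ∀ i : Fin n, f i ∈ H.edges ∧ w i.castSucc ≠ w i.succ ∧
        w i.castSucc ∈ f i ∧ w i.succ ∈ f i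

/-- The distance between two vertices: the minimum length of a walk joining them,
`⊤ = ∞` if there is none. -/
noncomputable def dist (H : FinHypergraph V) (u v : V) : ℕ∞ :=
  sInf {x : ℕ∞ | ∃ n : ℕ, x = n ∧ H.HasWalk u v n}

/-- A hypergraph is connected if any two vertices are joined by a walk. -/
def Connected (H : FinHypergraph V) : Prop := ∀ u v : V, ∃ n, H.HasWalk u v n

/-- A hypergraph is simple if every edge has at least two vertices and
no edge is contained in another edge. -/
def Simple (H : FinHypergraph V) : Prop :=
  (∀ e ∈ H.edges, 2 ≤ e.card) ∧ ∀ e ∈ H.edges, ∀ f ∈ H.edges, e ⊆ f → e = f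

/-- A hypergraph is loopless if every edge has at least two vertices. -/
def Loopless (H : FinHypergraph V) : Prop := ∀ e ∈ H.edges, 2 ≤ e.card

/-- The rank: the maximum cardinality of an edge. -/
noncomputable def rank (H : FinHypergraph V) : ℕ := sSup (Finset.card '' H.edges)

/-- The anti-rank: the minimum cardinality of an edge. -/
noncomputable def antirank (H : FinHypergraph V) : ℕ := sInf (Finset.card '' H.edges)

/-- A proper coloring: no color class contains an edge. -/
def IsProperColoring (H : FinHypergraph V) {k : ℕ} (c : V → Fin k) : Prop :=
  ∀ e ∈ H.edges, ∀ i : Fin k, ¬ ∀ v ∈ e, c v = i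

/-- A proper strong coloring: a proper coloring in which the vertices of every
edge receive pairwise distinct colors. -/
def IsStrongColoring (H : FinHypergraph V) {k : ℕ} (c : V → Fin k) : Prop :=
  H.IsProperColoring c ∧ ∀ e ∈ H.edges, ∀ u ∈ e, ∀ v ∈ e, u ≠ v → c u ≠ c v

/-- The chromatic number: the least `k` admitting a proper `k`-coloring. -/
noncomputable def chromaticNumber (H : FinHypergraph V) : ℕ :=
  sInf {k : ℕ | ∃ c : V → Fin k, H.IsProperColoring c}

/-- The strong chromatic number: the least `k` admitting a proper strong `k`-coloring. -/
noncomputable def strongChromaticNumber (H : FinHypergraph V) : ℕ :=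
  sInf {k : ℕ | ∃ c : V → Fin k, H.IsStrongColoring c}

/-- The Helly property: every intersecting family of edges is a star. -/
def Helly (H : FinHypergraph V) : Prop :=
  ∀ E' ⊆ H.edges, (∀ e ∈ E', ∀ f ∈ E', ∃ x, x ∈ e ∧ x ∈ f) → ∃ v, ∀ e ∈ E', v ∈ e

/-- The covering number: the minimum cardinality of a set of vertices meeting every edge. -/
noncomputable def coverNumber (H : FinHypergraph V) : ℕ :=
  sInf {k : ℕ | ∃ T : Finset V, T.card = k ∧ ∀ e ∈ H.edges, ∃ v ∈ T, v ∈ e}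

/-- The Cartesian product of hypergraphs. -/
def cartProd (H₁ : FinHypergraph V₁) (H₂ : FinHypergraph V₂) : FinHypergraph (V₁ × V₂) where
  edges := {E | (∃ x, ∃ f ∈ H₂.edges, E = {x} ×ˢ f) ∨ ∃ e ∈ H₁.edges, ∃ y, E = e ×ˢ {y}}
  nonempty_edges := by
    rintro E (⟨x, f, hf, rfl⟩ | ⟨e, he, y, rfl⟩)
    · exact (Finset.singleton_nonempty x).product (H₂.nonempty_edges f hf)
    · exact (H₁.nonempty_edges e he).product (Finset.singleton_nonempty y)

section Products

variable [DecidableEq V₁] [DecidableEq V₂]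

/-- The minimal-rank-preserving direct product `H₁ ×̌ H₂`. -/
def minDirProd (H₁ : FinHypergraph V₁) (H₂ : FinHypergraph V₂) : FinHypergraph (V₁ × V₂) where
  edges := {E | ∃ e₁ ∈ H₁.edges, ∃ e₂ ∈ H₂.edges,
    E ⊆ e₁ ×ˢ e₂ ∧ E.card = min e₁.card e₂.card ∧
      (E.image Prod.fst).card = min e₁.card e₂.card ∧
      (E.image Prod.snd).card = min e₁.card e₂.card}
  nonempty_edges := by
    rintro E ⟨e₁, h₁, e₂, h₂, -, hc, -, -⟩
    rw [← Finset.card_pos, hc]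
    exact lt_min (Finset.card_pos.mpr (H₁.nonempty_edges e₁ h₁))
      (Finset.card_pos.mpr (H₂.nonempty_edges e₂ h₂))

/-- The maximal-rank-preserving direct product `H₁ ×̂ H₂`. -/
def maxDirProd (H₁ : FinHypergraph V₁) (H₂ : FinHypergraph V₂) : FinHypergraph (V₁ × V₂) where
  edges := {E | ∃ e₁ ∈ H₁.edges, ∃ e₂ ∈ H₂.edges,
    E ⊆ e₁ ×ˢ e₂ ∧ E.card = max e₁.card e₂.card ∧
      E.image Prod.fst = e₁ ∧ E.image Prod.snd = e₂}
  nonempty_edges := by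
    rintro E ⟨e₁, h₁, e₂, h₂, -, hc, -, -⟩
    rw [← Finset.card_pos, hc]
    exact lt_max_iff.mpr (Or.inl (Finset.card_pos.mpr (H₁.nonempty_edges e₁ h₁)))

/-- The non-rank-preserving direct product `H₁ ×̃ H₂`. -/
def nrDirProd (H₁ : FinHypergraph V₁) (H₂ : FinHypergraph V₂) : FinHypergraph (V₁ × V₂) where
  edges := {E | ∃ e ∈ H₁.edges, ∃ f ∈ H₂.edges, ∃ x ∈ e, ∃ y ∈ f,
    E = insert (x, y) ((e.erase x) ×ˢ (f.erase y))}
  nonempty_edges := by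
    rintro E ⟨e, -, f, -, x, -, y, -, rfl⟩
    exact Finset.insert_nonempty _ _

/-- The normal product `H₁ ⊠̌ H₂`: union of the Cartesian product edges and the
minimal-rank-preserving direct product edges. -/
def normalProd (H₁ : FinHypergraph V₁) (H₂ : FinHypergraph V₂) : FinHypergraph (V₁ × V₂) where
  edges := (H₁.cartProd H₂).edges ∪ (H₁.minDirProd H₂).edges
  nonempty_edges := by
    rintro E (h | h)
    · exact (H₁.cartProd H₂).nonempty_edges E h
    · exact (H₁.minDirProd H₂).nonempty_edges E h

/-- The strong product `H₁ ⊠̂ H₂`: union of the Cartesian product edges and the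
maximal-rank-preserving direct product edges. -/
def strongProd (H₁ : FinHypergraph V₁) (H₂ : FinHypergraph V₂) : FinHypergraph (V₁ × V₂) where
  edges := (H₁.cartProd H₂).edges ∪ (H₁.maxDirProd H₂).edges
  nonempty_edges := by
    rintro E (h | h)
    · exact (H₁.cartProd H₂).nonempty_edges E h
    · exact (H₁.maxDirProd H₂).nonempty_edges E h

/-- The lexicographic product `H₁ ∘ H₂`. -/
def lexProd (H₁ : FinHypergraph V₁) (H₂ : FinHypergraph V₂) : FinHypergraph (V₁ × V₂) where
  edges := {E | (E.image Prod.fst ∈ H₁.edges ∧ (E.image Prod.fst).card = E.card) ∨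
    ∃ x, ∃ e₂ ∈ H₂.edges, E = {x} ×ˢ e₂}
  nonempty_edges := by
    rintro E (⟨h₁, hc⟩ | ⟨x, e₂, h₂, rfl⟩)
    · rw [← Finset.card_pos, ← hc]
      exact Finset.card_pos.mpr (H₁.nonempty_edges _ h₁)
    · exact (Finset.singleton_nonempty x).product (H₂.nonempty_edges e₂ h₂)

end Products

/-- The square product `H₁ ■ H₂`. -/
def squareProd (H₁ : FinHypergraph V₁) (H₂ : FinHypergraph V₂) : FinHypergraph (V₁ × V₂) where
  edges := {E | ∃ e₁ ∈ H₁.edges, ∃ e₂ ∈ H₂.edges, E = e₁ ×ˢ e₂}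
  nonempty_edges := by
    rintro E ⟨e₁, h₁, e₂, h₂, rfl⟩
    exact (H₁.nonempty_edges e₁ h₁).product (H₂.nonempty_edges e₂ h₂)

/-- The 2-section of a hypergraph: distinct vertices are adjacent iff they lie
in a common edge. -/
def twoSection (H : FinHypergraph V) : SimpleGraph V where
  Adj x y := x ≠ y ∧ ∃ e ∈ H.edges, x ∈ e ∧ y ∈ e
  symm := by constructor; rintro x y ⟨hxy, e, he, hx, hy⟩; exact ⟨hxy.symm, e, he, hy, hx⟩
  loopless := by constructor; rintro x ⟨hx, -⟩; exact hx rfl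

end FinHypergraph

namespace Function.Embedding

variable {α β : Type*}

def graph (s : α → β) : α ↪ α × β :=
  ⟨fun a => (a, s a), fun _ _ h => congrArg Prod.fst h⟩

@[simp]
theorem graph_apply (s : α → β) (a : α) : graph s a = (a, s a) :=
  rfl

theorem image_fst_map_graph [DecidableEq α] (s : α → β) (e : Finset α) :
    (e.map (graph s)).image Prod.fst = e := by
  ext a
  simp

end Function.Embedding

namespace FinHypergraph

variable {V₁ V₂ : Type*} [DecidableEq V₁] {H₁ : FinHypergraph V₁} {H₂ : FinHypergraph V₂}

theorem map_graph_mem_lexProd_edges {e : Finset V₁} (he : e ∈ H₁.edges) (s : V₁ → V₂) :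
    e.map (Function.Embedding.graph s) ∈ (H₁.lexProd H₂).edges := by
  left
  rw [Function.Embedding.image_fst_map_graph, Finset.card_map]
  exact ⟨he, rfl⟩

theorem singleton_product_mem_lexProd_edges (a : V₁) {e : Finset V₂} (he : e ∈ H₂.edges) :
    {a} ×ˢ e ∈ (H₁.lexProd H₂).edges :=
  Or.inr ⟨a, e, he, rfl⟩

theorem lexGraphProd_adj_of_mem_lexProd_edges {x y : V₁ × V₂} (hxy : x ≠ y)
    {E : Finset (V₁ × V₂)} (hE : E ∈ (H₁.lexProd H₂).edges) (hx : x ∈ E) (hy : y ∈ E) :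
    (H₁.twoSection.lexGraphProd H₂.twoSection).Adj x y := by
  rcases hE with ⟨hE₁, hcard⟩ | ⟨a, e, he, rfl⟩
  · have hfst : x.1 ≠ y.1 := fun h =>
      hxy (Finset.injOn_of_card_image_eq hcard hx hy h)
    exact Or.inl ⟨hfst, _, hE₁, Finset.mem_image_of_mem _ hx, Finset.mem_image_of_mem _ hy⟩
  · rw [Finset.mem_product, Finset.mem_singleton] at hx hy
    have hfst : x.1 = y.1 := hx.1.trans hy.1.symm
    exact Or.inr ⟨hfst, fun hsnd => hxy (Prod.ext hfst hsnd), e, he, hx.2, hy.2⟩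

end FinHypergraph

theorem twoSection_lexProd_general {V₁ V₂ : Type*} [DecidableEq V₁] (H₁ : FinHypergraph V₁)
    (H₂ : FinHypergraph V₂) :
    (H₁.lexProd H₂).twoSection =
      SimpleGraph.lexGraphProd H₁.twoSection H₂.twoSection := by
  ext x y
  constructor
  · rintro ⟨hxy, E, hE, hx, hy⟩
    exact FinHypergraph.lexGraphProd_adj_of_mem_lexProd_edges hxy hE hx hy
  · rintro (⟨hfst, e, he, hx, hy⟩ | ⟨hfst, hsnd, e, he, hx, hy⟩)
    · -- lift `e` along a section of `Prod.fst` passing through both `x` and `y`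
      let s : V₁ → V₂ := Function.update (fun _ => x.2) y.1 y.2
      refine ⟨fun h => hfst (congrArg Prod.fst h), _,
        FinHypergraph.map_graph_mem_lexProd_edges he s, ?_, ?_⟩
      · exact Finset.mem_map.mpr ⟨x.1, hx, by simp [s, hfst]⟩
      · exact Finset.mem_map.mpr ⟨y.1, hy, by simp [s]⟩
    · refine ⟨fun h => hsnd (congrArg Prod.snd h), _,
        FinHypergraph.singleton_product_mem_lexProd_edges x.1 he, ?_, ?_⟩
      · exact Finset.mem_product.mpr ⟨Finset.mem_singleton_self _, hx⟩
      · exact Finset.mem_product.mpr ⟨Finset.mem_singleton.mpr hfst.symm, hy⟩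

/-- the 2-section of the lexicographic product is the lexicographic product
of the 2-sections. -/
theorem twoSection_lexProd {V₁ V₂ : Type*} [Fintype V₁] [Nonempty V₁] [DecidableEq V₁]
    [Fintype V₂] [Nonempty V₂] [DecidableEq V₂] (H₁ : FinHypergraph V₁) (H₂ : FinHypergraph V₂) :
    (H₁.lexProd H₂).twoSection =
      SimpleGraph.lexGraphProd H₁.twoSection H₂.twoSection :=
  twoSection_lexProd_general H₁ H₂
end
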